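/- arXiv:2408.06562 — 5 statements merged into one kernel-verified Lean document; each statement's English description precedes it below -/
import Mathlib

section
/- The quaternion algebra B₆ over ℚ with basis 1, I, J, K satisfying I² = 3, J² = −1, K = IJ = −JI is a division algebra: every nonzero element of B₆ is invertible. -/
open Quaternion

/-! A quaternion is invertible as soon as its reduced norm `x * star x` is nonzero, and on
`(p, -1 / ℚ)` the norm is `r² - p i² + j² - p k²`. This form is anisotropic when `p ≡ 3 mod 4`:
after clearing denominators a nontrivial zero gives integers with `r² + j² = p (i² + k²)`; as `-1`
is not a square mod `p`, all four are divisible by `p` with quotients again a solution, so by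
descent they vanish. -/

namespace QuaternionAlgebra

theorem isUnit_of_re_mul_star_ne_zero {K : Type*} [Field K] {c₁ c₂ c₃ : K}
    {a : ℍ[K,c₁,c₂,c₃]} (h : (a * star a).re ≠ 0) : IsUnit a := by
  set n := (a * star a).re
  have hmul : a * star a = n := mul_star_eq_coe a
  refine isUnit_iff_exists.mpr ⟨n⁻¹ • star a, ?_, ?_⟩
  · rw [Algebra.mul_smul_comm, hmul, smul_coe, inv_mul_cancel₀ h, coe_one]
  · rw [Algebra.smul_mul_assoc, star_comm_self', hmul, smul_coe, inv_mul_cancel₀ h, coe_one]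

theorem re_mul_star {R : Type*} [CommRing R] {c₁ c₃ : R} (a : ℍ[R,c₁,c₃]) :
    (a * star a).re = a.re ^ 2 - c₁ * a.imI ^ 2 - c₃ * a.imJ ^ 2 + c₁ * c₃ * a.imK ^ 2 := by
  simp only [re_mul, re_star, imI_star, imJ_star, imK_star]
  ring

end QuaternionAlgebra

namespace Int

variable {p : ℕ} [Fact p.Prime]

theorem dvd_of_dvd_sq_add_sq (hp : p % 4 = 3) {a b : ℤ} (h : (p : ℤ) ∣ a ^ 2 + b ^ 2) :
    (p : ℤ) ∣ a ∧ (p : ℤ) ∣ b := by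
  simp only [← ZMod.intCast_zmod_eq_zero_iff_dvd] at h ⊢
  push_cast at h
  have hb : (b : ZMod p) = 0 := by
    by_contra hb
    exact ZMod.mod_four_ne_three_of_sq_eq_neg_sq' hb (eq_neg_of_add_eq_zero_left h) hp
  rw [hb, zero_pow two_ne_zero, add_zero, pow_eq_zero_iff two_ne_zero] at h
  exact ⟨h, hb⟩

theorem exists_eq_mul_of_sq_add_sq_eq_mul (hp : p % 4 = 3) {a b c d : ℤ}
    (h : a ^ 2 + b ^ 2 = p * (c ^ 2 + d ^ 2)) :
    ∃ a' b' c' d' : ℤ, a = p * a' ∧ b = p * b' ∧ c = p * c' ∧ d = p * d' ∧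
      a' ^ 2 + b' ^ 2 = p * (c' ^ 2 + d' ^ 2) := by
  have hp0 : (p : ℤ) ≠ 0 := by exact_mod_cast (Fact.out : p.Prime).ne_zero
  obtain ⟨⟨a', rfl⟩, ⟨b', rfl⟩⟩ := dvd_of_dvd_sq_add_sq hp (h ▸ dvd_mul_right _ _)
  have h' : c ^ 2 + d ^ 2 = p * (a' ^ 2 + b' ^ 2) :=
    mul_left_cancel₀ hp0 (by linear_combination -h)
  obtain ⟨⟨c', rfl⟩, ⟨d', rfl⟩⟩ := dvd_of_dvd_sq_add_sq hp (h' ▸ dvd_mul_right _ _)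
  exact ⟨a', b', c', d', rfl, rfl, rfl, rfl,
    mul_left_cancel₀ hp0 (by linear_combination -h')⟩

theorem eq_zero_of_forall_pow_dvd {x : ℤ} (h : ∀ n : ℕ, (p : ℤ) ^ n ∣ x) : x = 0 := by
  by_contra hx
  refine FiniteMultiplicity.not_iff_forall.mpr h (finiteMultiplicity_iff.mpr ⟨?_, hx⟩)
  simpa using (Fact.out : p.Prime).ne_one

theorem eq_zero_of_sq_add_sq_eq_mul (hp : p % 4 = 3) {a b c d : ℤ}
    (h : a ^ 2 + b ^ 2 = p * (c ^ 2 + d ^ 2)) : a = 0 ∧ b = 0 ∧ c = 0 ∧ d = 0 := by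
  have h_pow_dvd : ∀ n : ℕ, ∀ a b c d : ℤ, a ^ 2 + b ^ 2 = p * (c ^ 2 + d ^ 2) →
      (p : ℤ) ^ n ∣ a ∧ (p : ℤ) ^ n ∣ b ∧ (p : ℤ) ^ n ∣ c ∧ (p : ℤ) ^ n ∣ d := by
    intro n
    induction n with
    | zero => simp
    | succ n ih =>
      intro a b c d h
      obtain ⟨a', b', c', d', rfl, rfl, rfl, rfl, h'⟩ := exists_eq_mul_of_sq_add_sq_eq_mul hp h
      obtain ⟨ha, hb, hc, hd⟩ := ih a' b' c' d' h'
      simp only [pow_succ']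
      exact ⟨mul_dvd_mul_left _ ha, mul_dvd_mul_left _ hb, mul_dvd_mul_left _ hc,
        mul_dvd_mul_left _ hd⟩
  exact ⟨eq_zero_of_forall_pow_dvd fun n ↦ (h_pow_dvd n a b c d h).1,
    eq_zero_of_forall_pow_dvd fun n ↦ (h_pow_dvd n a b c d h).2.1,
    eq_zero_of_forall_pow_dvd fun n ↦ (h_pow_dvd n a b c d h).2.2.1,
    eq_zero_of_forall_pow_dvd fun n ↦ (h_pow_dvd n a b c d h).2.2.2⟩

end Int

theorem Rat.exists_intCast_eq_mul_of_den_dvd {q : ℚ} {m : ℕ} (h : q.den ∣ m) :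
    ∃ z : ℤ, (z : ℚ) = m * q := by
  obtain ⟨k, rfl⟩ := h
  exact ⟨q.num * k, by push_cast; rw [← q.den_mul_eq_num]; ring⟩

theorem Rat.eq_zero_of_sq_add_sq_eq_mul {p : ℕ} [Fact p.Prime] (hp : p % 4 = 3) {a b c d : ℚ}
    (h : a ^ 2 + b ^ 2 = p * (c ^ 2 + d ^ 2)) : a = 0 ∧ b = 0 ∧ c = 0 ∧ d = 0 := by
  set D : ℕ := a.den * b.den * c.den * d.den
  obtain ⟨a', ha'⟩ := exists_intCast_eq_mul_of_den_dvd (q := a) (m := D)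
    (dvd_mul_of_dvd_left (dvd_mul_of_dvd_left (dvd_mul_right _ _) _) _)
  obtain ⟨b', hb'⟩ := exists_intCast_eq_mul_of_den_dvd (q := b) (m := D)
    (dvd_mul_of_dvd_left (dvd_mul_of_dvd_left (dvd_mul_left _ _) _) _)
  obtain ⟨c', hc'⟩ := exists_intCast_eq_mul_of_den_dvd (q := c) (m := D)
    (dvd_mul_of_dvd_left (dvd_mul_left _ _) _)
  obtain ⟨d', hd'⟩ := exists_intCast_eq_mul_of_den_dvd (q := d) (m := D)
    (dvd_mul_left _ _)
  have h_int : a' ^ 2 + b' ^ 2 = p * (c' ^ 2 + d' ^ 2) := by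
    have : (a' : ℚ) ^ 2 + b' ^ 2 = p * (c' ^ 2 + d' ^ 2) := by
      rw [ha', hb', hc', hd']; linear_combination (D : ℚ) ^ 2 * h
    exact_mod_cast this
  have hD : (D : ℚ) ≠ 0 := by positivity
  obtain ⟨rfl, rfl, rfl, rfl⟩ := Int.eq_zero_of_sq_add_sq_eq_mul hp h_int
  simp only [Int.cast_zero, zero_eq_mul, hD, false_or] at ha' hb' hc' hd'
  exact ⟨ha', hb', hc', hd'⟩

theorem QuaternionAlgebra.isUnit_of_ne_zero_of_mod_four_eq_three {p : ℕ} [Fact p.Prime]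
    (hp : p % 4 = 3) {x : ℍ[ℚ, p, -1]} (hx : x ≠ 0) : IsUnit x := by
  refine isUnit_of_re_mul_star_ne_zero fun h ↦ hx ?_
  rw [re_mul_star] at h
  obtain ⟨hre, himJ, himI, himK⟩ :=
    Rat.eq_zero_of_sq_add_sq_eq_mul hp (a := x.re) (b := x.imJ) (c := x.imI) (d := x.imK)
      (by linear_combination h)
  ext <;> assumption

/-- The quaternion algebra `B₆ = (3, −1 / ℚ)` of discriminant 6 is a division algebra:
every nonzero element is invertible. -/
theorem B6_is_division_algebra :
    ∀ x : ℍ[ℚ, 3, -1], x ≠ 0 → IsUnit x :=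
  fun _ ↦ QuaternionAlgebra.isUnit_of_ne_zero_of_mod_four_eq_three (p := 3) rfl
end

section
/- For every real λ with 0 < λ < 1, the improper integral ∫₁^∞ dx / √(x(x−1)(x−λ)) converges and ₂F₁(1/2, 1/2; 1; λ) = (1/π) ∫₁^∞ dx / √(x(x−1)(x−λ)). -/
open Finset MeasureTheory

/-- The Pochhammer symbol `(a)_k = a(a+1)⋯(a+k−1)`. -/
noncomputable def poch (a : ℝ) (k : ℕ) : ℝ := ∏ i ∈ Finset.range k, (a + i)

/-- The Gauss hypergeometric series `₂F₁(a, b; c; t)`. -/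
noncomputable def F21 (a b c t : ℝ) : ℝ :=
  ∑' k : ℕ, poch a k * poch b k / (poch c k * (Nat.factorial k)) * t ^ k

/-!
Substituting `x = 1/t` turns the integral into `∫₀¹ dt / √(t(1−t)(1−λt))`. Expanding
`(1−λt)^(−1/2) = ∑ₖ (1/2)ₖ/k! · (λt)^k` by the binomial series and integrating term by term
with the Beta integral `∫₀¹ t^k / √(t(1−t)) = B(k + 1/2, 1/2) = π (1/2)ₖ/k!` gives
`π ∑ₖ ((1/2)ₖ/k!)² λ^k = π ₂F₁(1/2, 1/2; 1; λ)`.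
-/

open scoped Nat

lemma poch_succ (a : ℝ) (k : ℕ) : poch a (k + 1) = poch a k * (a + k) :=
  prod_range_succ _ k

lemma poch_nonneg {a : ℝ} (ha : 0 ≤ a) (k : ℕ) : 0 ≤ poch a k :=
  prod_nonneg fun i _ => by positivity

lemma poch_le_poch {a b : ℝ} (ha : 0 ≤ a) (hab : a ≤ b) (k : ℕ) : poch a k ≤ poch b k :=
  prod_le_prod (fun i _ => by positivity) fun i _ => by linarith

lemma poch_one (k : ℕ) : poch 1 k = k ! := by
  induction k with
  | zero => simp [poch]
  | succ k ih => rw [poch_succ, ih, Nat.factorial_succ]; push_cast; ring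

lemma poch_eq_ascPochhammer_eval (a : ℝ) (k : ℕ) : poch a k = (ascPochhammer ℝ k).eval a := by
  induction k with
  | zero => simp [poch]
  | succ k ih => rw [poch_succ, ih, ascPochhammer_succ_eval]

lemma choose_add_sub_one_eq_poch_div (a : ℝ) (n : ℕ) :
    Ring.choose (a + n - 1) n = poch a n / n ! := by
  rw [Ring.choose_eq_smul, Polynomial.descPochhammer_smeval_eq_ascPochhammer,
    Polynomial.ascPochhammer_smeval_eq_eval, poch_eq_ascPochhammer_eval,
    show a + n - 1 - n + 1 = a by ring, smul_eq_mul, div_eq_inv_mul]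

theorem hasSum_poch_div_factorial_mul_pow (a : ℝ) {x : ℝ} (hx : |x| < 1) :
    HasSum (fun n => poch a n / n ! * x ^ n) (1 / (1 - x) ^ a) := by
  have := (Real.one_div_one_sub_rpow_hasFPowerSeriesOnBall_zero a).hasSum
    (y := x) (by simpa [enorm_eq_nnnorm, ← NNReal.coe_lt_coe] using hx)
  simpa [FormalMultilinearSeries.ofScalars_apply_eq, choose_add_sub_one_eq_poch_div, mul_comm]
    using this

noncomputable def invSqrtCoeff (k : ℕ) : ℝ := poch (1 / 2) k / k !

lemma invSqrtCoeff_nonneg (k : ℕ) : 0 ≤ invSqrtCoeff k :=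
  div_nonneg (poch_nonneg (by norm_num) k) (Nat.cast_nonneg _)

lemma invSqrtCoeff_le_one (k : ℕ) : invSqrtCoeff k ≤ 1 := by
  rw [invSqrtCoeff, div_le_one (by positivity), ← poch_one]
  exact poch_le_poch (by norm_num) (by norm_num) k

theorem hasSum_invSqrtCoeff_mul_pow {x : ℝ} (hx : |x| < 1) :
    HasSum (fun k => invSqrtCoeff k * x ^ k) (1 / √(1 - x)) := by
  rw [Real.sqrt_eq_rpow]
  exact hasSum_poch_div_factorial_mul_pow (1 / 2) hx

lemma F21_half_half_one (x : ℝ) :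
    F21 (1 / 2) (1 / 2) 1 x = ∑' k, invSqrtCoeff k ^ 2 * x ^ k := by
  simp only [F21, poch_one, invSqrtCoeff, sq, mul_div_mul_comm]

lemma ofReal_rpow_mul_one_sub_rpow {a b x : ℝ} (hx : x ∈ Set.Ioo 0 1) :
    ((x ^ (a - 1) * (1 - x) ^ (b - 1) : ℝ) : ℂ) =
      (x : ℂ) ^ ((a : ℂ) - 1) * (1 - (x : ℂ)) ^ ((b : ℂ) - 1) := by
  rw [Complex.ofReal_mul, Complex.ofReal_cpow hx.1.le, Complex.ofReal_cpow (sub_nonneg.2 hx.2.le)]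
  push_cast
  rfl

theorem integrableOn_rpow_mul_one_sub_rpow {a b : ℝ} (ha : 0 < a) (hb : 0 < b) :
    IntegrableOn (fun x : ℝ => x ^ (a - 1) * (1 - x) ^ (b - 1)) (Set.Ioo 0 1) := by
  have h := Complex.betaIntegral_convergent (u := a) (v := b) (by simpa) (by simpa)
  rw [intervalIntegrable_iff_integrableOn_Ioo_of_le zero_le_one] at h
  simpa [IntegrableOn] using
    (h.congr_fun (fun x hx => (ofReal_rpow_mul_one_sub_rpow hx).symm) measurableSet_Ioo).re

theorem integral_rpow_mul_one_sub_rpow {a b : ℝ} (ha : 0 < a) (hb : 0 < b) :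
    ∫ x in Set.Ioo (0 : ℝ) 1, x ^ (a - 1) * (1 - x) ^ (b - 1) =
      Real.Gamma a * Real.Gamma b / Real.Gamma (a + b) := by
  have h := Complex.betaIntegral_eq_Gamma_mul_div (u := a) (v := b) (by simpa) (by simpa)
  rw [Complex.betaIntegral, intervalIntegral.integral_of_le zero_le_one,
    integral_Ioc_eq_integral_Ioo,
    ← setIntegral_congr_fun measurableSet_Ioo (fun x hx => ofReal_rpow_mul_one_sub_rpow hx),
    integral_complex_ofReal, ← Complex.ofReal_add, Complex.Gamma_ofReal, Complex.Gamma_ofReal,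
    Complex.Gamma_ofReal] at h
  exact_mod_cast h

lemma Gamma_nat_add_half (k : ℕ) : Real.Gamma (k + 1 / 2) = poch (1 / 2) k * √Real.pi := by
  induction k with
  | zero => simpa [poch] using Real.Gamma_one_half_eq
  | succ k ih =>
    rw [Nat.cast_succ, add_right_comm, Real.Gamma_add_one (by positivity), ih, poch_succ]
    ring

lemma rpow_mul_one_sub_rpow_eq_pow_div_sqrt {k : ℕ} {t : ℝ} (ht : t ∈ Set.Ioo 0 1) :
    t ^ ((k + 1 / 2 : ℝ) - 1) * (1 - t) ^ ((1 / 2 : ℝ) - 1) = t ^ k / √(t * (1 - t)) := by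
  obtain ⟨ht0, ht1⟩ := ht
  rw [Real.sqrt_mul ht0.le, Real.sqrt_eq_rpow, Real.sqrt_eq_rpow,
    show (k + 1 / 2 : ℝ) - 1 = k + -(1 / 2) by ring, Real.rpow_add ht0, Real.rpow_natCast,
    show (1 / 2 : ℝ) - 1 = -(1 / 2) by ring, Real.rpow_neg ht0.le, Real.rpow_neg (by linarith)]
  ring

lemma integrableOn_pow_div_sqrt_mul_one_sub (k : ℕ) :
    IntegrableOn (fun t : ℝ => t ^ k / √(t * (1 - t))) (Set.Ioo 0 1) :=
  (integrableOn_rpow_mul_one_sub_rpow (by positivity) one_half_pos).congr_fun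
    (fun _ ht => rpow_mul_one_sub_rpow_eq_pow_div_sqrt ht) measurableSet_Ioo

lemma integral_pow_div_sqrt_mul_one_sub (k : ℕ) :
    ∫ t in Set.Ioo (0 : ℝ) 1, t ^ k / √(t * (1 - t)) = Real.pi * invSqrtCoeff k := by
  rw [← setIntegral_congr_fun measurableSet_Ioo
      (fun _ ht => rpow_mul_one_sub_rpow_eq_pow_div_sqrt ht),
    integral_rpow_mul_one_sub_rpow (by positivity) one_half_pos, Gamma_nat_add_half,
    Real.Gamma_one_half_eq, add_assoc, add_halves, Real.Gamma_nat_eq_factorial, invSqrtCoeff]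
  field_simp
  rw [Real.sq_sqrt Real.pi_pos.le]

section ChangeOfVariables

variable {E : Type*} [NormedAddCommGroup E] [NormedSpace ℝ E]

lemma image_inv_Ioo_zero_one : (fun t : ℝ => t⁻¹) '' Set.Ioo 0 1 = Set.Ioi 1 := by
  rw [Set.image_inv_eq_inv, Set.inv_Ioo_0_left one_pos, inv_one]

lemma hasDerivWithinAt_inv_Ioo_zero_one {t : ℝ} (ht : t ∈ Set.Ioo 0 1) :
    HasDerivWithinAt (fun t : ℝ => t⁻¹) (-(t ^ 2)⁻¹) (Set.Ioo 0 1) t :=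
  (hasDerivAt_inv ht.1.ne').hasDerivWithinAt

lemma abs_neg_inv_sq (t : ℝ) : |-(t ^ 2)⁻¹| = (t ^ 2)⁻¹ := by
  rw [abs_neg, abs_of_nonneg (by positivity)]

theorem integrableOn_Ioi_one_iff_comp_inv {f : ℝ → E} :
    IntegrableOn f (Set.Ioi 1) ↔ IntegrableOn (fun t => (t ^ 2)⁻¹ • f t⁻¹) (Set.Ioo 0 1) := by
  simpa only [image_inv_Ioo_zero_one, abs_neg_inv_sq] using
    integrableOn_image_iff_integrableOn_abs_deriv_smul measurableSet_Ioo
      (fun t ht => hasDerivWithinAt_inv_Ioo_zero_one ht) inv_injective.injOn f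

theorem integral_Ioi_one_eq_integral_comp_inv (f : ℝ → E) :
    ∫ x in Set.Ioi 1, f x = ∫ t in Set.Ioo 0 1, (t ^ 2)⁻¹ • f t⁻¹ := by
  simpa only [image_inv_Ioo_zero_one, abs_neg_inv_sq] using
    integral_image_eq_integral_abs_deriv_smul measurableSet_Ioo
      (fun t ht => hasDerivWithinAt_inv_Ioo_zero_one ht) inv_injective.injOn f

end ChangeOfVariables

lemma inv_sq_mul_one_div_sqrt_cubic_inv (lam : ℝ) {t : ℝ} (ht : 0 < t) :
    (t ^ 2)⁻¹ * (1 / √(t⁻¹ * (t⁻¹ - 1) * (t⁻¹ - lam))) =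
      1 / √(t * (1 - t) * (1 - lam * t)) := by
  have hcubic : t⁻¹ * (t⁻¹ - 1) * (t⁻¹ - lam) = t * (1 - t) * (1 - lam * t) / (t ^ 2) ^ 2 := by
    field_simp
  rw [hcubic, Real.sqrt_div' _ (by positivity), Real.sqrt_sq (by positivity)]
  field_simp

section InvSqrtCubic

variable {lam : ℝ}

lemma hasSum_one_div_sqrt_cubic {t : ℝ} (hlam : |lam| ≤ 1) (ht : t ∈ Set.Ioo 0 1) :
    HasSum (fun k => invSqrtCoeff k * lam ^ k * (t ^ k / √(t * (1 - t))))
      (1 / √(t * (1 - t) * (1 - lam * t))) := by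
  obtain ⟨ht0, ht1⟩ := ht
  have hx : |lam * t| < 1 := by
    rw [abs_mul, abs_of_pos ht0]
    nlinarith [abs_nonneg lam]
  rw [Real.sqrt_mul (mul_pos ht0 (sub_pos.2 ht1)).le, mul_comm (√(t * (1 - t))),
    ← one_div_mul_one_div]
  exact ((hasSum_invSqrtCoeff_mul_pow hx).mul_right _).congr_fun fun k => by ring

theorem integrableOn_one_div_sqrt_cubic (hlam : |lam| < 1) :
    IntegrableOn (fun t : ℝ => 1 / √(t * (1 - t) * (1 - lam * t))) (Set.Ioo 0 1) := by
  refine ((integrableOn_pow_div_sqrt_mul_one_sub 0).const_mul (√(1 - |lam|))⁻¹).mono'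
    (by fun_prop : Measurable fun t : ℝ => 1 / √(t * (1 - t) * (1 - lam * t))).aestronglyMeasurable
    ((ae_restrict_mem measurableSet_Ioo).mono fun t ⟨ht0, ht1⟩ => ?_)
  have hlt : 1 - |lam| ≤ 1 - lam * t := by
    nlinarith [le_abs_self lam, abs_nonneg lam]
  have hpos : 0 < √(1 - |lam|) := Real.sqrt_pos.2 (by linarith)
  rw [Real.norm_of_nonneg (by positivity), Real.sqrt_mul (by nlinarith), pow_zero]
  calc 1 / (√(t * (1 - t)) * √(1 - lam * t)) = (√(1 - lam * t))⁻¹ * (1 / √(t * (1 - t))) := by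
        ring
    _ ≤ (√(1 - |lam|))⁻¹ * (1 / √(t * (1 - t))) := by gcongr

theorem hasSum_integral_one_div_sqrt_cubic (hlam : |lam| < 1) :
    HasSum (fun k => Real.pi * (invSqrtCoeff k ^ 2 * lam ^ k))
      (∫ t in Set.Ioo (0 : ℝ) 1, 1 / √(t * (1 - t) * (1 - lam * t))) := by
  set F : ℕ → ℝ → ℝ := fun k t => invSqrtCoeff k * lam ^ k * (t ^ k / √(t * (1 - t)))
  have hF_int (k : ℕ) : Integrable (F k) (volume.restrict (Set.Ioo 0 1)) :=
    (integrableOn_pow_div_sqrt_mul_one_sub k).const_mul _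
  have hF_norm (k : ℕ) :
      ∫ t in Set.Ioo 0 1, ‖F k t‖ = Real.pi * (invSqrtCoeff k ^ 2 * |lam| ^ k) := by
    rw [setIntegral_congr_fun measurableSet_Ioo
      (g := fun t => invSqrtCoeff k * |lam| ^ k * (t ^ k / √(t * (1 - t)))) fun t ht => ?_,
      integral_const_mul, integral_pow_div_sqrt_mul_one_sub]
    · ring
    · have hnonneg : 0 ≤ t ^ k / √(t * (1 - t)) :=
        div_nonneg (pow_nonneg ht.1.le k) (Real.sqrt_nonneg _)
      simp only [F, norm_mul, norm_pow, Real.norm_eq_abs, abs_of_nonneg (invSqrtCoeff_nonneg k),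
        abs_of_nonneg hnonneg]
  have hF_sum : Summable fun k => ∫ t in Set.Ioo 0 1, ‖F k t‖ := by
    simp only [hF_norm]
    refine ((summable_geometric_of_lt_one (abs_nonneg lam) hlam).mul_left Real.pi).of_nonneg_of_le
      (fun k => by positivity) fun k => ?_
    have hsq : invSqrtCoeff k ^ 2 ≤ 1 :=
      pow_le_one₀ (invSqrtCoeff_nonneg k) (invSqrtCoeff_le_one k)
    gcongr
    exact mul_le_of_le_one_left (by positivity) hsq
  have hF_integral (k : ℕ) :
      ∫ t in Set.Ioo 0 1, F k t = Real.pi * (invSqrtCoeff k ^ 2 * lam ^ k) := by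
    rw [integral_const_mul, integral_pow_div_sqrt_mul_one_sub]
    ring
  have hF_tsum : ∫ t in Set.Ioo 0 1, ∑' k, F k t =
      ∫ t in Set.Ioo (0 : ℝ) 1, 1 / √(t * (1 - t) * (1 - lam * t)) :=
    setIntegral_congr_fun measurableSet_Ioo fun _ ht =>
      (hasSum_one_div_sqrt_cubic hlam.le ht).tsum_eq
  simpa only [hF_integral, hF_tsum] using hasSum_integral_of_summable_integral_norm hF_int hF_sum

end InvSqrtCubic

/-- For `0 < λ < 1` the integral `∫₁^∞ dx/√(x(x−1)(x−λ))` converges and equals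
`π · ₂F₁(1/2, 1/2; 1; λ)`. -/
theorem F21_period_integral (lam : ℝ) (h0 : 0 < lam) (h1 : lam < 1) :
    IntegrableOn (fun x : ℝ => 1 / Real.sqrt (x * (x - 1) * (x - lam))) (Set.Ioi 1) ∧
      F21 (1 / 2) (1 / 2) 1 lam =
        (1 / Real.pi) * ∫ x in Set.Ioi (1 : ℝ), 1 / Real.sqrt (x * (x - 1) * (x - lam)) := by
  have hlam : |lam| < 1 := abs_lt.2 ⟨by linarith, h1⟩
  have hsubst (t : ℝ) (ht : t ∈ Set.Ioo 0 1) :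
      (t ^ 2)⁻¹ • (1 / √(t⁻¹ * (t⁻¹ - 1) * (t⁻¹ - lam))) = 1 / √(t * (1 - t) * (1 - lam * t)) :=
    inv_sq_mul_one_div_sqrt_cubic_inv lam ht.1
  constructor
  · rw [integrableOn_Ioi_one_iff_comp_inv]
    exact (integrableOn_one_div_sqrt_cubic hlam).congr_fun (fun t ht => (hsubst t ht).symm)
      measurableSet_Ioo
  · rw [integral_Ioi_one_eq_integral_comp_inv, setIntegral_congr_fun measurableSet_Ioo hsubst,
      ← (hasSum_integral_one_div_sqrt_cubic hlam).tsum_eq, tsum_mul_left, F21_half_half_one,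
      one_div, inv_mul_cancel_left₀ Real.pi_ne_zero]
end

section
/- Let a, b, c be complex numbers with c not zero or a negative integer. The function F(t) = ₂F₁(a, b; c; t) = ∑_{k≥0} (a)_k(b)_k/((c)_k k!) t^k, holomorphic on the open unit disk in ℂ, satisfies the hypergeometric differential equation t(1−t) F''(t) + (c − (a+b+1)t) F'(t) − ab F(t) = 0 for all t with |t| < 1. -/
/-!
`F21C a b c` is Mathlib's `ordinaryHypergeometric a b c`, whose series has radius of convergence
at least one (exactly one, or `⊤` when `a` or `b` is a nonpositive integer), so it can be
differentiated termwise on the unit disk. Writing `A n` for its coefficients, both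
`t F'' + c F'` and `t (t F'' + (a + b + 1) F') + a b F` expand to `∑ (n + a) (n + b) A n tⁿ`,
by the recurrence `(n + 1) (n + c) A (n + 1) = (n + a) (n + b) A n`; the differential
equation is the difference of these two expansions.
-/

open Finset

/-- The complex Pochhammer symbol `(a)_k = a(a+1)⋯(a+k−1)`. -/
noncomputable def pochC (a : ℂ) (k : ℕ) : ℂ := ∏ i ∈ Finset.range k, (a + i)

/-- The Gauss hypergeometric series `₂F₁(a, b; c; t)`. -/
noncomputable def F21C (a b c : ℂ) : ℂ → ℂ :=
  fun t => ∑' k : ℕ, pochC a k * pochC b k / (pochC c k * (Nat.factorial k : ℂ)) * t ^ k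

open FormalMultilinearSeries

theorem HasSum.natCast_mul_pow_of_succ {R : Type*} [CommRing R] [TopologicalSpace R]
    [IsTopologicalRing R] {B : ℕ → R} {t s : R}
    (h : HasSum (fun n => (n + 1) * B (n + 1) * t ^ n) s) :
    HasSum (fun n => n * B n * t ^ n) (t * s) := by
  refine (hasSum_nat_add_iff' 1).mp ?_
  simp only [range_one, sum_singleton, Nat.cast_zero, zero_mul, sub_zero]
  refine (h.mul_left t).congr_fun fun n => ?_
  push_cast
  ring

section PowerSeries

variable {𝕜 : Type*} [NontriviallyNormedField 𝕜] {A : ℕ → 𝕜} {f : 𝕜 → 𝕜} {r : ENNReal}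

theorem HasFPowerSeriesOnBall.hasSum_ofScalars (h : HasFPowerSeriesOnBall f (ofScalars 𝕜 A) 0 r)
    {z : 𝕜} (hz : z ∈ Metric.eball 0 r) :
    HasSum (fun n => A n * z ^ n) (f z) := by
  simpa [ofScalars_apply_eq, mul_comm] using h.hasSum hz

theorem HasFPowerSeriesOnBall.deriv_ofScalars [CompleteSpace 𝕜]
    (h : HasFPowerSeriesOnBall f (ofScalars 𝕜 A) 0 r) :
    HasFPowerSeriesOnBall (deriv f) (ofScalars 𝕜 fun n => (n + 1) * A (n + 1)) 0 r := by
  convert (ContinuousLinearMap.apply 𝕜 𝕜 (1 : 𝕜)).comp_hasFPowerSeriesOnBall h.fderiv using 1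
  · ext z
    simp
  · ext n
    simp [coeff_ofScalars]

theorem HasFPowerSeriesOnBall.hypergeometric_ode [CompleteSpace 𝕜] {a b c : 𝕜}
    (h : HasFPowerSeriesOnBall f (ofScalars 𝕜 A) 0 r)
    (hA : ∀ n : ℕ, (n + 1) * (n + c) * A (n + 1) = (n + a) * (n + b) * A n)
    {t : 𝕜} (ht : t ∈ Metric.eball 0 r) :
    t * (1 - t) * deriv (deriv f) t + (c - (a + b + 1) * t) * deriv f t - a * b * f t = 0 := by
  have h₁ := h.deriv_ofScalars
  have s₀ := h.hasSum_ofScalars ht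
  have s₁ := h₁.hasSum_ofScalars ht
  have s₂ := h₁.deriv_ofScalars.hasSum_ofScalars ht
  have ts₂ := HasSum.natCast_mul_pow_of_succ (B := fun n : ℕ => (n + 1) * A (n + 1)) s₂
  have lhs : HasSum (fun n : ℕ => (n + a) * (n + b) * A n * t ^ n)
      (t * deriv (deriv f) t + c * deriv f t) :=
    (ts₂.add (s₁.mul_left c)).congr_fun fun n => by
      rw [← hA]
      ring
  have rhs : HasSum (fun n : ℕ => (n + a) * (n + b) * A n * t ^ n)
      (t * (t * deriv (deriv f) t + (a + b + 1) * deriv f t) + a * b * f t) := by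
    have hsum := (ts₂.add (s₁.mul_left (a + b + 1))).congr_fun
      (g := fun n : ℕ => (n + 1) * ((↑(n + 1) + a + b) * A (n + 1)) * t ^ n) fun n => by
        push_cast
        ring
    exact (hsum.natCast_mul_pow_of_succ (B := fun n : ℕ => (n + a + b) * A n)
      |>.add (s₀.mul_left (a * b))).congr_fun fun n => by ring
  linear_combination lhs.unique rhs

end PowerSeries

theorem one_le_radius_ordinaryHypergeometricSeries {𝕂 : Type*} (𝔸 : Type*) [RCLike 𝕂]
    [NormedDivisionRing 𝔸] [NormedAlgebra 𝕂 𝔸] (a b : 𝕂) {c : 𝕂} (hc : ∀ k : ℕ, c ≠ -k) :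
    1 ≤ (ordinaryHypergeometricSeries 𝔸 a b c).radius := by
  by_cases hab : ∃ k : ℕ, a = -k ∨ b = -k
  · obtain ⟨k, rfl | rfl⟩ := hab
    · simp [ordinaryHypergeometric_radius_top_of_neg_nat₁]
    · simp [ordinaryHypergeometric_radius_top_of_neg_nat₂]
  · push Not at hab
    refine (ordinaryHypergeometricSeries_radius_eq_one 𝔸 a b c fun k => ⟨?_, ?_, ?_⟩).ge
    exacts [fun h => (hab k).1 (by linear_combination h),
      fun h => (hab k).2 (by linear_combination h), fun h => hc k (by linear_combination h)]

theorem mul_ordinaryHypergeometricCoefficient_succ {𝕂 : Type*} [Field 𝕂] [CharZero 𝕂]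
    (a b c : 𝕂) {n : ℕ} (hcn : c + n ≠ 0) :
    (n + 1) * (n + c) * ordinaryHypergeometricCoefficient a b c (n + 1) =
      (n + a) * (n + b) * ordinaryHypergeometricCoefficient a b c n := by
  simp only [ordinaryHypergeometricCoefficient, ascPochhammer_succ_eval, Nat.factorial_succ,
    Nat.cast_mul, mul_inv]
  push_cast
  have hn : ((n : 𝕂) + 1) * ((n : 𝕂) + 1)⁻¹ = 1 :=
    mul_inv_cancel₀ (by exact_mod_cast n.succ_ne_zero)
  have hc : (c + n) * (c + n)⁻¹ = 1 := mul_inv_cancel₀ hcn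
  linear_combination (n + a) * (n + b) * ordinaryHypergeometricCoefficient a b c n *
    ((c + n) * (c + n)⁻¹ * hn + hc)

theorem pochC_eq_ascPochhammer_eval (a : ℂ) (k : ℕ) : pochC a k = (ascPochhammer ℂ k).eval a := by
  induction k with
  | zero => simp [pochC]
  | succ k ih => rw [pochC, prod_range_succ, ← pochC, ih, ascPochhammer_succ_eval]

theorem F21C_eq_ordinaryHypergeometric (a b c : ℂ) : F21C a b c = ordinaryHypergeometric a b c := by
  ext t
  rw [ordinaryHypergeometric_eq_tsum, F21C]
  refine tsum_congr fun k => ?_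
  simp only [pochC_eq_ascPochhammer_eval, smul_eq_mul]
  ring

theorem hasFPowerSeriesOnBall_F21C (a b : ℂ) {c : ℂ} (hc : ∀ n : ℕ, c ≠ -(n : ℂ)) :
    HasFPowerSeriesOnBall (F21C a b c) (ofScalars ℂ (ordinaryHypergeometricCoefficient a b c))
      0 1 := by
  have hr := one_le_radius_ordinaryHypergeometricSeries ℂ a b hc
  rw [F21C_eq_ordinaryHypergeometric]
  exact ((ordinaryHypergeometricSeries ℂ a b c).hasFPowerSeriesOnBall
    (zero_lt_one.trans_le hr)).mono one_pos hr

/-- If `c` is not zero or a negative integer, `₂F₁(a, b; c; ·)` is holomorphic on the unit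
disk and satisfies the hypergeometric differential equation
`t(1−t) F'' + (c − (a+b+1)t) F' − ab F = 0`. -/
theorem F21_hypergeometric_ODE (a b c : ℂ) (hc : ∀ n : ℕ, c ≠ -(n : ℂ)) :
    DifferentiableOn ℂ (F21C a b c) (Metric.ball 0 1) ∧
      ∀ t : ℂ, ‖t‖ < 1 →
        t * (1 - t) * deriv (deriv (F21C a b c)) t + (c - (a + b + 1) * t) * deriv (F21C a b c) t
          - a * b * F21C a b c t = 0 := by
  have hF := hasFPowerSeriesOnBall_F21C a b hc
  have hball : Metric.eball (0 : ℂ) 1 = Metric.ball 0 1 := by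
    simpa using Metric.eball_coe (x := (0 : ℂ)) (ε := 1)
  refine ⟨hball ▸ hF.differentiableOn, fun t ht => hF.hypergeometric_ode (fun n => ?_) ?_⟩
  · exact mul_ordinaryHypergeometricCoefficient_succ a b c fun h => hc n (by linear_combination h)
  · exact hball ▸ mem_ball_zero_iff.mpr ht
end

section
/- Let F be a field of characteristic different from 2, and let σ ∈ F with σ(σ⁴ − 1) ≠ 0. Set λ = (σ + σ⁻¹)²/4. If (x, y) ∈ F² satisfies the Jacobi quartic equation y² = (1 − σ²x²)(1 − x²/σ²) and x ≠ 1/σ, then the point X = ((σ² + 1)/(2σ²)) · (x − σ)/(x − 1/σ), Y = ((σ⁴ − 1)/(4σ³)) · y/(x − 1/σ)² satisfies the Legendre equation Y² = X(X − 1)(X − λ). -/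
/-!
With `t = x - σ⁻¹`, the quartic factors as `y² = t (x + σ⁻¹)(x - σ)(x + σ)`, and the Möbius map
`x ↦ X` sends the roots `σ, -σ, -σ⁻¹` to `0, 1, λ` and `σ⁻¹` to infinity: `X`, `X - 1` and `X - λ`
are constant multiples of `(x - σ)/t`, `(x + σ)/t` and `(x + σ⁻¹)/t`. Hence `X(X-1)(X-λ)` and
`Y² = ((σ⁴ - 1)/(4σ³))² y²/t⁴` are both `((σ⁴ - 1)/(4σ³))² (x - σ)(x + σ)(x + σ⁻¹)/t³`.
-/

namespace JacobiQuartic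

variable {F : Type} [Field F] {σ : F}

lemma mul_sub_one_ne_zero (hσ : σ ≠ 0) {x : F} (hx : x ≠ 1 / σ) : σ * x - 1 ≠ 0 := by
  rw [sub_ne_zero]
  contrapose! hx
  field_simp
  linear_combination hx

lemma four_ne_zero_of_two_ne_zero (h2 : (2 : F) ≠ 0) : (4 : F) ≠ 0 := by
  simpa [show (4 : F) = 2 ^ 2 by norm_num] using h2

lemma quartic_eq_prod (hσ : σ ≠ 0) (x : F) :
    (1 - σ ^ 2 * x ^ 2) * (1 - x ^ 2 / σ ^ 2) =
      (x - 1 / σ) * (x + 1 / σ) * (x - σ) * (x + σ) := by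
  field_simp
  ring

lemma mobius_sub_one (h2 : (2 : F) ≠ 0) (hσ : σ ≠ 0) {x : F} (hx : x ≠ 1 / σ) :
    (σ ^ 2 + 1) / (2 * σ ^ 2) * ((x - σ) / (x - 1 / σ)) - 1 =
      (1 - σ ^ 2) / (2 * σ ^ 2) * ((x + σ) / (x - 1 / σ)) := by
  have hσx : σ * x - 1 ≠ 0 := mul_sub_one_ne_zero hσ hx
  field_simp
  ring

lemma mobius_sub_lambda (h2 : (2 : F) ≠ 0) (hσ : σ ≠ 0) {x : F} (hx : x ≠ 1 / σ) :
    (σ ^ 2 + 1) / (2 * σ ^ 2) * ((x - σ) / (x - 1 / σ)) - (σ + σ⁻¹) ^ 2 / 4 =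
      (σ ^ 2 + 1) * (1 - σ ^ 2) / (4 * σ ^ 2) * ((x + 1 / σ) / (x - 1 / σ)) := by
  have hσx : σ * x - 1 ≠ 0 := mul_sub_one_ne_zero hσ hx
  have h4 := four_ne_zero_of_two_ne_zero h2
  field_simp
  ring

end JacobiQuartic

open JacobiQuartic in
/-- Change of variables from the Jacobi quartic `y² = (1 − σ²x²)(1 − x²/σ²)` to the Legendre
curve `Y² = X(X−1)(X−λ)` with `λ = (σ + σ⁻¹)²/4`. -/
theorem jacobi_quartic_to_legendre {F : Type} [Field F] (h2 : (2 : F) ≠ 0)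
    (σ : F) (hσ : σ * (σ ^ 4 - 1) ≠ 0) (x y : F)
    (hxy : y ^ 2 = (1 - σ ^ 2 * x ^ 2) * (1 - x ^ 2 / σ ^ 2)) (hx : x ≠ 1 / σ) :
    ((σ ^ 4 - 1) / (4 * σ ^ 3) * (y / (x - 1 / σ) ^ 2)) ^ 2 =
      ((σ ^ 2 + 1) / (2 * σ ^ 2) * ((x - σ) / (x - 1 / σ))) *
        ((σ ^ 2 + 1) / (2 * σ ^ 2) * ((x - σ) / (x - 1 / σ)) - 1) *
        ((σ ^ 2 + 1) / (2 * σ ^ 2) * ((x - σ) / (x - 1 / σ)) - (σ + σ⁻¹) ^ 2 / 4) := by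
  have hσ0 : σ ≠ 0 := left_ne_zero_of_mul hσ
  have ht : x - 1 / σ ≠ 0 := sub_ne_zero.mpr hx
  rw [mobius_sub_one h2 hσ0 hx, mobius_sub_lambda h2 hσ0 hx, mul_pow, div_pow y, hxy,
    quartic_eq_prod hσ0]
  -- the remaining identity holds with `t = x - σ⁻¹` treated as an independent unknown
  generalize x - 1 / σ = t at ht ⊢
  have h4 := four_ne_zero_of_two_ne_zero h2
  field_simp
  ring
end

section
/- The matrices T₀ = [[1,2],[0,1]] and T₁ = [[1,0],[−2,1]] generate a free subgroup of SL₂(ℤ) of rank 2; that is, the group homomorphism from the free group on two generators to SL₂(ℤ) sending the generators to T₀ and T₁ respectively is injective. -/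
open Matrix MatrixGroups

/-- `T₀ = [[1,2],[0,1]]` as an element of `SL(2,ℤ)`. -/
def T₀ : SL(2, ℤ) := ⟨!![1, 2; 0, 1], by norm_num [Matrix.det_fin_two_of]⟩

/-- `T₁ = [[1,0],[−2,1]]` as an element of `SL(2,ℤ)`. -/
def T₁ : SL(2, ℤ) := ⟨!![1, 0; -2, 1], by norm_num [Matrix.det_fin_two_of]⟩

/-!
Ping-pong on the nonzero vectors `(x, y)` of `ℤ²`. In terms of the slope `r = x / y ∈ ℚ ∪ {∞}`,
`T₀` acts as `r ↦ r + 2`, so it maps the complement of `Y₀ = {r < -1}` into `X₀ = {r ≥ 1} ∪ {∞}`,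
and `T₀⁻¹` maps the complement of `X₀` into `Y₀`. The quarter turn `(x, y) ↦ (y, -x)` conjugates
`T₁` to `T₀` and carries `X₁ = {-1 ≤ r ≤ 0}` and `Y₁ = {0 < r < 1}` to `X₀` and `Y₀`. The four
sets are pairwise disjoint once the zero vector, which lies in both `X₀` and `X₁`, is removed.
-/

open scoped Function Pointwise

def nonzeroSubMulAction (G M : Type*) [Group G] [AddMonoid M] [DistribMulAction G M] :
    SubMulAction G M where
  carrier := {v | v ≠ 0}
  smul_mem' g _ := (smul_ne_zero_iff_ne g).2

@[simp]
lemma mem_nonzeroSubMulAction {G M : Type*} [Group G] [AddMonoid M] [DistribMulAction G M]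
    {v : M} : v ∈ nonzeroSubMulAction G M ↔ v ≠ 0 :=
  Iff.rfl

lemma pairwise_disjoint_fin_two {α : Type*} [PartialOrder α] [OrderBot α] {s : Fin 2 → α}
    (h : Disjoint (s 0) (s 1)) : Pairwise (Disjoint on s) := by
  intro i j hij
  fin_cases i <;> fin_cases j
  exacts [absurd rfl hij, h, h.symm, absurd rfl hij]

lemma eq_zero_and_eq_zero_of_mul_eq_zero_of_sq_eq_sq {M₀ : Type*} [MonoidWithZero M₀]
    [NoZeroDivisors M₀] {x y : M₀} (h₁ : x * y = 0) (h₂ : x ^ 2 = y ^ 2) : x = 0 ∧ y = 0 := by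
  rcases mul_eq_zero.1 h₁ with rfl | rfl
  · exact ⟨rfl, pow_eq_zero_iff two_ne_zero |>.1 (h₂.symm.trans (zero_pow two_ne_zero))⟩
  · exact ⟨pow_eq_zero_iff two_ne_zero |>.1 (h₂.trans (zero_pow two_ne_zero)), rfl⟩

section ShearInequalities

variable {R : Type*} [CommRing R] [LinearOrder R] [IsStrictOrderedRing R] {x y : R}

lemma nonneg_and_sq_le_of_not_neg_and_sq_lt (h : ¬(x * y < 0 ∧ y ^ 2 < x ^ 2)) :
    0 ≤ (x + 2 * y) * y ∧ y ^ 2 ≤ (x + 2 * y) ^ 2 := by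
  rw [not_and_or, not_lt, not_lt] at h
  rcases h with h | h
  · constructor <;> nlinarith [sq_nonneg y]
  · constructor <;> nlinarith [sq_nonneg (x + y), sq_nonneg y]

lemma neg_and_sq_lt_of_not_nonneg_and_sq_le (h : ¬(0 ≤ x * y ∧ y ^ 2 ≤ x ^ 2)) :
    (x - 2 * y) * y < 0 ∧ y ^ 2 < (x - 2 * y) ^ 2 := by
  rw [not_and_or, not_le, not_le] at h
  rcases h with h | h
  · constructor <;> nlinarith [sq_nonneg y, sq_nonneg x]
  · constructor <;> nlinarith [sq_nonneg (x - y), sq_nonneg y]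

end ShearInequalities

lemma T₀_smul (v : Fin 2 → ℤ) : T₀ • v = ![v 0 + 2 * v 1, v 1] := by
  rw [Matrix.SpecialLinearGroup.smul_def]
  ext i; fin_cases i <;> simp [T₀, mulVec, dotProduct, Fin.sum_univ_two]

lemma T₀_inv_smul (v : Fin 2 → ℤ) : T₀⁻¹ • v = ![v 0 - 2 * v 1, v 1] := by
  rw [Matrix.SpecialLinearGroup.smul_def, Matrix.SpecialLinearGroup.coe_inv]
  ext i; fin_cases i <;>
    simp [T₀, adjugate_fin_two_of, mulVec, dotProduct, Fin.sum_univ_two, sub_eq_add_neg, mul_comm]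

lemma T₁_smul (v : Fin 2 → ℤ) : T₁ • v = ![v 0, v 1 - 2 * v 0] := by
  rw [Matrix.SpecialLinearGroup.smul_def]
  ext i; fin_cases i <;>
    simp [T₁, mulVec, dotProduct, Fin.sum_univ_two, sub_eq_add_neg, mul_comm, add_comm]

lemma T₁_inv_smul (v : Fin 2 → ℤ) : T₁⁻¹ • v = ![v 0, v 1 + 2 * v 0] := by
  rw [Matrix.SpecialLinearGroup.smul_def, Matrix.SpecialLinearGroup.coe_inv]
  ext i; fin_cases i <;>
    simp [T₁, adjugate_fin_two_of, mulVec, dotProduct, Fin.sum_univ_two, mul_comm, add_comm]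

def sanovX : Fin 2 → Set (Fin 2 → ℤ)
  | 0 => {v | 0 ≤ v 0 * v 1 ∧ v 1 ^ 2 ≤ v 0 ^ 2}
  | 1 => {v | v 0 * v 1 ≤ 0 ∧ v 0 ^ 2 ≤ v 1 ^ 2}

def sanovY : Fin 2 → Set (Fin 2 → ℤ)
  | 0 => {v | v 0 * v 1 < 0 ∧ v 1 ^ 2 < v 0 ^ 2}
  | 1 => {v | 0 < v 0 * v 1 ∧ v 0 ^ 2 < v 1 ^ 2}

lemma T₀_smul_mem_sanovX {v : Fin 2 → ℤ} (hv : v ∉ sanovY 0) : T₀ • v ∈ sanovX 0 := by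
  rw [T₀_smul]
  exact nonneg_and_sq_le_of_not_neg_and_sq_lt hv

lemma T₀_inv_smul_mem_sanovY {v : Fin 2 → ℤ} (hv : v ∉ sanovX 0) : T₀⁻¹ • v ∈ sanovY 0 := by
  rw [T₀_inv_smul]
  exact neg_and_sq_lt_of_not_nonneg_and_sq_le hv

lemma T₁_smul_mem_sanovX {v : Fin 2 → ℤ} (hv : v ∉ sanovY 1) : T₁ • v ∈ sanovX 1 := by
  obtain ⟨h₁, h₂⟩ := nonneg_and_sq_le_of_not_neg_and_sq_lt (x := v 1) (y := -v 0)
    fun ⟨hxy, hsq⟩ => hv ⟨by linarith, by linarith⟩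
  simp only [sanovX, Set.mem_ofPred_eq, T₁_smul, cons_val_zero, cons_val_one, cons_val_fin_one]
  exact ⟨by linarith, by linarith⟩

lemma T₁_inv_smul_mem_sanovY {v : Fin 2 → ℤ} (hv : v ∉ sanovX 1) : T₁⁻¹ • v ∈ sanovY 1 := by
  obtain ⟨h₁, h₂⟩ := neg_and_sq_lt_of_not_nonneg_and_sq_le (x := v 1) (y := -v 0)
    fun ⟨hxy, hsq⟩ => hv ⟨by linarith, by linarith⟩
  simp only [sanovY, Set.mem_ofPred_eq, T₁_inv_smul, cons_val_zero, cons_val_one, cons_val_fin_one]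
  exact ⟨by linarith, by linarith⟩

lemma disjoint_sanovX_sanovY (i j : Fin 2) : Disjoint (sanovX i) (sanovY j) := by
  rw [Set.disjoint_left]
  fin_cases i <;> fin_cases j <;> rintro v ⟨h₁, h₂⟩ ⟨h₃, h₄⟩ <;> linarith

lemma disjoint_sanovY : Disjoint (sanovY 0) (sanovY 1) :=
  Set.disjoint_left.2 fun _ ⟨h₁, _⟩ ⟨h₂, _⟩ => by linarith

lemma sanovX_inter_subset : sanovX 0 ∩ sanovX 1 ⊆ {0} := by
  rintro v ⟨⟨hxy₀, hsq₀⟩, hxy₁, hsq₁⟩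
  obtain ⟨h0, h1⟩ := eq_zero_and_eq_zero_of_mul_eq_zero_of_sq_eq_sq (le_antisymm hxy₁ hxy₀)
    (le_antisymm hsq₁ hsq₀)
  ext i; fin_cases i <;> assumption

/-- `T₀` and `T₁` generate a free subgroup of rank 2 of `SL(2,ℤ)`: the homomorphism from
the free group on two generators sending the generators to `T₀` and `T₁` is injective. -/
theorem T0_T1_generate_free_group :
    Function.Injective (FreeGroup.lift (fun i : Fin 2 => if i = 0 then T₀ else T₁)) := by
  refine FreeGroup.injective_lift_of_ping_pong (α := nonzeroSubMulAction SL(2, ℤ) (Fin 2 → ℤ)) _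
    (fun i => Subtype.val ⁻¹' sanovX i) (fun i => Subtype.val ⁻¹' sanovY i) ?_ ?_ ?_ ?_ ?_ ?_
  · intro i
    fin_cases i
    exacts [⟨⟨![1, 0], by simp⟩, by simp [sanovX]⟩, ⟨⟨![0, 1], by simp⟩, by simp [sanovX]⟩]
  · refine pairwise_disjoint_fin_two (Set.disjoint_left.2 fun v h₀ h₁ => v.2 ?_)
    exact sanovX_inter_subset ⟨h₀, h₁⟩
  · exact pairwise_disjoint_fin_two (disjoint_sanovY.preimage _)
  · exact fun i j => (disjoint_sanovX_sanovY i j).preimage _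
  · intro i
    refine Set.smul_set_subset_iff.2 fun v hv => ?_
    fin_cases i
    exacts [T₀_smul_mem_sanovX hv, T₁_smul_mem_sanovX hv]
  · intro i
    refine Set.smul_set_subset_iff.2 fun v hv => ?_
    fin_cases i
    exacts [T₀_inv_smul_mem_sanovY hv, T₁_inv_smul_mem_sanovY hv]
end
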